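/- Let Γ₁ = (V₁, E₁) and Γ₂ = (V₂, E₂) be finite simple graphs with the same coupling constant J, let h : Γ₁ → Γ₂ be a graph homomorphism, and suppose the edge set E₁ is partitioned into the edge sets of subgraphs Γ¹, …, Γᵏ of Γ₁ (pairwise disjoint edge sets whose union is E₁) such that for each i the restriction of h to Γⁱ is a graph isomorphism onto Γ₂ (a bijection of the vertex set of Γⁱ onto V₂ inducing a bijection of the edge set of Γⁱ onto E₂). If s⁽²⁾ : V₂ → ℝ³ is a ground state of Γ₂, then the pulled-back state s⁽¹⁾ := s⁽²⁾ ∘ h : V₁ → ℝ³ is a ground state of Γ₁. -/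
import Mathlib


open scoped RealInnerProductSpace

/-- The energy of a state of a spin system given by a simple graph with uniform
coupling constant `J`: `H_Γ(s) = 2J ∑_{edges {μ,ν}} ⟨s_μ, s_ν⟩`, written as a sum
over ordered adjacent pairs. -/
noncomputable def graphEnergy {V : Type*} [Fintype V] (Γ : SimpleGraph V)
    [DecidableRel Γ.Adj] (J : ℝ) (s : V → EuclideanSpace ℝ (Fin 3)) : ℝ :=
  J * ∑ μ, ∑ ν, if Γ.Adj μ ν then ⟪s μ, s ν⟫ else 0

theorem ground_state_extension {V₁ V₂ : Type*} [Fintype V₁] [Fintype V₂]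
    (Γ₁ : SimpleGraph V₁) (Γ₂ : SimpleGraph V₂)
    [DecidableRel Γ₁.Adj] [DecidableRel Γ₂.Adj]
    (J : ℝ)
    -- h is a graph homomorphism:
    (h : V₁ → V₂) (hhom : ∀ μ ν, Γ₁.Adj μ ν → Γ₂.Adj (h μ) (h ν))
    -- the edge set of Γ₁ is partitioned into the edge sets of subgraphs Γi 1, …, Γi k:
    (k : ℕ) (Γi : Fin k → Γ₁.Subgraph)
    (hcover : ∀ e ∈ Γ₁.edgeSet, ∃! i : Fin k, e ∈ (Γi i).edgeSet)
    -- the restriction of h to each Γi is a graph isomorphism onto Γ₂: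
    (hisoV : ∀ i : Fin k, Set.BijOn h (Γi i).verts Set.univ)
    (hisoE : ∀ i : Fin k, Set.BijOn (Sym2.map h) (Γi i).edgeSet Γ₂.edgeSet)
    -- s₂ is a ground state of Γ₂:
    (s₂ : V₂ → EuclideanSpace ℝ (Fin 3)) (hs₂ : ∀ v, ‖s₂ v‖ = 1)
    (hground : ∀ t : V₂ → EuclideanSpace ℝ (Fin 3), (∀ v, ‖t v‖ = 1) →
      graphEnergy Γ₂ J s₂ ≤ graphEnergy Γ₂ J t) :
    -- then s₂ ∘ h is a ground state of Γ₁: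
    (∀ v, ‖(s₂ ∘ h) v‖ = 1) ∧
      ∀ t : V₁ → EuclideanSpace ℝ (Fin 3), (∀ v, ‖t v‖ = 1) →
        graphEnergy Γ₁ J (s₂ ∘ h) ≤ graphEnergy Γ₁ J t := by
  classical
  refine ⟨fun v => hs₂ (h v), fun t ht => ?_⟩
  cases isEmpty_or_nonempty V₁ with
  | inl hE => simp [graphEnergy]
  | inr hNE =>
  -- Step A: split the energy sum along the partition
  have stepA : ∀ (s : V₁ → EuclideanSpace ℝ (Fin 3)),
      (∑ μ, ∑ ν, if Γ₁.Adj μ ν then ⟪s μ, s ν⟫ else 0)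
        = ∑ i : Fin k, ∑ μ, ∑ ν, if (Γi i).Adj μ ν then ⟪s μ, s ν⟫ else 0 := by
    intro s
    have point : ∀ μ ν : V₁, (if Γ₁.Adj μ ν then ⟪s μ, s ν⟫ else 0)
        = ∑ i : Fin k, if (Γi i).Adj μ ν then ⟪s μ, s ν⟫ else 0 := by
      intro μ ν
      by_cases hadj : Γ₁.Adj μ ν
      · obtain ⟨i0, hi0, huniq⟩ := hcover s(μ, ν) (by simpa using hadj)
        rw [if_pos hadj, Finset.sum_eq_single i0]
        · rw [if_pos (by simpa [SimpleGraph.Subgraph.mem_edgeSet] using hi0)]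
        · intro j _ hj
          refine if_neg fun hja => hj (huniq j ?_)
          simpa [SimpleGraph.Subgraph.mem_edgeSet] using hja
        · intro hmem; exact absurd (Finset.mem_univ i0) hmem
      · rw [if_neg hadj]
        exact (Finset.sum_eq_zero fun j _ =>
          if_neg fun hja => hadj ((Γi j).adj_sub hja)).symm
    calc (∑ μ, ∑ ν, if Γ₁.Adj μ ν then ⟪s μ, s ν⟫ else 0)
        = ∑ μ, ∑ ν, ∑ i : Fin k, if (Γi i).Adj μ ν then ⟪s μ, s ν⟫ else 0 :=
          Finset.sum_congr rfl fun μ _ => Finset.sum_congr rfl fun ν _ => point μ ν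
      _ = ∑ μ, ∑ i : Fin k, ∑ ν, if (Γi i).Adj μ ν then ⟪s μ, s ν⟫ else 0 :=
          Finset.sum_congr rfl fun μ _ => Finset.sum_comm
      _ = ∑ i : Fin k, ∑ μ, ∑ ν, if (Γi i).Adj μ ν then ⟪s μ, s ν⟫ else 0 :=
          Finset.sum_comm
  -- Step B: transport the energy sum over one part to Γ₂
  have stepB : ∀ (i : Fin k) (s : V₁ → EuclideanSpace ℝ (Fin 3))
      (u : V₂ → EuclideanSpace ℝ (Fin 3)),
      (∀ μ ∈ (Γi i).verts, s μ = u (h μ)) →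
      (∑ μ, ∑ ν, if (Γi i).Adj μ ν then ⟪s μ, s ν⟫ else 0)
        = ∑ a, ∑ b, if Γ₂.Adj a b then ⟪u a, u b⟫ else 0 := by
    intro i s u hsu
    have l1 : (∑ μ, ∑ ν, if (Γi i).Adj μ ν then ⟪s μ, s ν⟫ else 0)
        = ∑ p ∈ Finset.univ.filter (fun p : V₁ × V₁ => (Γi i).Adj p.1 p.2),
            ⟪s p.1, s p.2⟫ := by
      rw [Finset.sum_filter, Fintype.sum_prod_type]
    have l2 : (∑ a, ∑ b, if Γ₂.Adj a b then ⟪u a, u b⟫ else 0)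
        = ∑ p ∈ Finset.univ.filter (fun p : V₂ × V₂ => Γ₂.Adj p.1 p.2),
            ⟪u p.1, u p.2⟫ := by
      rw [Finset.sum_filter, Fintype.sum_prod_type]
    rw [l1, l2]
    refine Finset.sum_bij (fun p _ => (h p.1, h p.2)) ?_ ?_ ?_ ?_
    · intro p hp
      simp only [Finset.mem_filter, Finset.mem_univ, true_and] at hp ⊢
      exact hhom _ _ ((Γi i).adj_sub hp)
    · intro p hp q hq heq
      simp only [Finset.mem_filter, Finset.mem_univ, true_and] at hp hq
      simp only [Prod.mk.injEq] at heq
      have h1 := (hisoV i).injOn (SimpleGraph.Subgraph.edge_vert _ hp)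
        (SimpleGraph.Subgraph.edge_vert _ hq) heq.1
      have h2 := (hisoV i).injOn (SimpleGraph.Subgraph.edge_vert _ hp.symm)
        (SimpleGraph.Subgraph.edge_vert _ hq.symm) heq.2
      exact Prod.ext h1 h2
    · rintro ⟨a, b⟩ hab
      simp only [Finset.mem_filter, Finset.mem_univ, true_and] at hab
      obtain ⟨e, he, hmap⟩ := (hisoE i).surjOn (Γ₂.mem_edgeSet.mpr hab)
      revert he hmap
      induction e using Sym2.ind with
      | _ μ ν =>
        intro he hmap
        rw [SimpleGraph.Subgraph.mem_edgeSet] at he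
        rw [Sym2.map_pair_eq, Sym2.eq_iff] at hmap
        rcases hmap with ⟨h1, h2⟩ | ⟨h1, h2⟩
        · refine ⟨(μ, ν), ?_, ?_⟩
          · simp only [Finset.mem_filter, Finset.mem_univ, true_and]; exact he
          · exact Prod.ext h1 h2
        · refine ⟨(ν, μ), ?_, ?_⟩
          · simp only [Finset.mem_filter, Finset.mem_univ, true_and]; exact he.symm
          · exact Prod.ext h2 h1
    · intro p hp
      simp only [Finset.mem_filter, Finset.mem_univ, true_and] at hp
      rw [hsu _ (SimpleGraph.Subgraph.edge_vert _ hp),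
        hsu _ (SimpleGraph.Subgraph.edge_vert _ hp.symm)]
  -- assemble
  have e1 : graphEnergy Γ₁ J (s₂ ∘ h) = ∑ i : Fin k, graphEnergy Γ₂ J s₂ := by
    unfold graphEnergy
    rw [stepA, Finset.mul_sum]
    exact Finset.sum_congr rfl fun i _ => by
      rw [stepB i (s₂ ∘ h) s₂ (fun μ _ => rfl)]
  have e2 : graphEnergy Γ₁ J t
      = ∑ i : Fin k, graphEnergy Γ₂ J (t ∘ Function.invFunOn h (Γi i).verts) := by
    unfold graphEnergy
    rw [stepA, Finset.mul_sum]
    refine Finset.sum_congr rfl fun i _ => ?_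
    rw [stepB i t (t ∘ Function.invFunOn h (Γi i).verts) ?_]
    intro μ hμ
    have := (hisoV i).injOn.leftInvOn_invFunOn hμ
    simp only [Function.comp_apply, this]
  rw [e1, e2]
  exact Finset.sum_le_sum fun i _ =>
    hground _ (fun a => ht (Function.invFunOn h (Γi i).verts a))
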